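/- Let Q be a set of questions, p⁺, p⁻ : Q → ℝ a probe whose averaged prediction satisfies p̃(q) ≠ 1/2 for every q ∈ Q, and let g : Q → {0,1} be an arbitrary binary map. Let f_p be the induced classifier of p, set h(q) = f_p(q) ⊕ g(q) (exclusive-or of binary values), and define the transformed probe p'⁺(q) = p⁺(q) ⊕ h(q), p'⁻(q) = p⁻(q) ⊕ h(q), where a ⊕ b = (1 − a)·b + (1 − b)·a. Then the induced classifier of p' equals the arbitrary map g: f_{p'}(q) = g(q) for every q ∈ Q. -/

import Mathlib

/-! Under `a ↦ 1 - 2a` the continuous exclusive-or becomes multiplication, so it is associative,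
and a binary value is its own inverse. The averaged prediction commutes with `⊕ h`, and for a
binary `h` thresholding at `1/2` does too, as long as the prediction is not exactly `1/2`. Hence
`f_{p'} = f_p ⊕ h = f_p ⊕ (f_p ⊕ g) = g`. -/

def cxor (a b : ℝ) : ℝ := (1 - a) * b + (1 - b) * a

section Cxor

variable (a b c : ℝ)

theorem cxor_assoc : cxor (cxor a b) c = cxor a (cxor b c) := by
  unfold cxor; ring

theorem cxor_zero_left : cxor 0 b = b := by
  unfold cxor; ring

theorem cxor_zero_right : cxor a 0 = a := by
  unfold cxor; ring

theorem cxor_one_right : cxor a 1 = 1 - a := by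
  unfold cxor; ring

variable {a b}

theorem cxor_self_of_binary (ha : a = 0 ∨ a = 1) : cxor a a = 0 := by
  rcases ha with rfl | rfl <;> norm_num [cxor]

theorem cxor_cxor_cancel_left (ha : a = 0 ∨ a = 1) : cxor a (cxor a b) = b := by
  rw [← cxor_assoc, cxor_self_of_binary ha, cxor_zero_left]

theorem cxor_binary (ha : a = 0 ∨ a = 1) (hb : b = 0 ∨ b = 1) :
    cxor a b = 0 ∨ cxor a b = 1 := by
  rcases ha with rfl | rfl <;> rcases hb with rfl | rfl <;> norm_num [cxor]

end Cxor

noncomputable def avgPrediction (pp pm : ℝ) : ℝ := (pp + (1 - pm)) / 2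

noncomputable def indClassifier (t : ℝ) : ℝ := if t > 1 / 2 then 1 else 0

theorem avgPrediction_cxor (pp pm h : ℝ) :
    avgPrediction (cxor pp h) (cxor pm h) = cxor (avgPrediction pp pm) h := by
  unfold avgPrediction cxor; ring

theorem indClassifier_one_sub {t : ℝ} (ht : t ≠ 1 / 2) :
    indClassifier (1 - t) = 1 - indClassifier t := by
  unfold indClassifier
  rcases ht.lt_or_gt with ht | ht
  · rw [if_pos (by linarith), if_neg (by linarith)]; norm_num
  · rw [if_neg (by linarith), if_pos ht]; norm_num

theorem indClassifier_cxor {t b : ℝ} (ht : t ≠ 1 / 2) (hb : b = 0 ∨ b = 1) :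
    indClassifier (cxor t b) = cxor (indClassifier t) b := by
  rcases hb with rfl | rfl
  · simp only [cxor_zero_right]
  · simp only [cxor_one_right, indClassifier_one_sub ht]

theorem indClassifier_binary (t : ℝ) : indClassifier t = 0 ∨ indClassifier t = 1 := by
  unfold indClassifier; split_ifs <;> simp

/-- If the averaged prediction of a probe is never exactly 1/2, then
transforming the probe by `⊕ h` with `h = f_p ⊕ g` makes the induced classifier
equal to the arbitrary binary map `g`. -/
theorem transformed_probe_induces_arbitrary_classifier {Q : Type*}
    (pp pm : Q → ℝ) (hne : ∀ q : Q, (pp q + (1 - pm q)) / 2 ≠ 1 / 2)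
    (g : Q → ℝ) (hg : ∀ q, g q = 0 ∨ g q = 1)
    (fp : Q → ℝ)
    (hfp : ∀ q, fp q = if (pp q + (1 - pm q)) / 2 > 1 / 2 then (1:ℝ) else 0)
    (h : Q → ℝ) (hh : ∀ q, h q = cxor (fp q) (g q))
    (pp' pm' : Q → ℝ)
    (hpp' : ∀ q, pp' q = cxor (pp q) (h q))
    (hpm' : ∀ q, pm' q = cxor (pm q) (h q)) :
    ∀ q : Q,
      (if (pp' q + (1 - pm' q)) / 2 > 1 / 2 then (1:ℝ) else 0) = g q := by
  intro q
  have hfq : fp q = indClassifier (avgPrediction (pp q) (pm q)) := hfp q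
  have hf_binary : fp q = 0 ∨ fp q = 1 := hfq ▸ indClassifier_binary _
  have hh_binary : h q = 0 ∨ h q = 1 := hh q ▸ cxor_binary hf_binary (hg q)
  have hne_q : avgPrediction (pp q) (pm q) ≠ 1 / 2 := hne q
  change indClassifier (avgPrediction (pp' q) (pm' q)) = g q
  rw [hpp', hpm', avgPrediction_cxor, indClassifier_cxor hne_q hh_binary, ← hfq, hh,
    cxor_cxor_cancel_left hf_binary]
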